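/- arXiv:2111.07481 — 2 statements merged into one kernel-verified Lean document; each statement's English description precedes it below -/
import Mathlib

section
/- Every extreme point of the feasible region of the partition LP (P) of a 2NC-TAP instance lies in the unit cube; that is, if x is an extreme point of {x ∈ ℝ^L : x_ℓ ≥ 0 for all ℓ ∈ L, and Σ_{ℓ ∈ L crossing 𝒫} x_ℓ ≥ |𝒫| − 1 for every non-leaf node u of T and every 𝒫 ∈ Ptn⊇(comps(T−u))}, then 0 ≤ x_ℓ ≤ 1 for every link ℓ ∈ L. -/
open scoped Classical
open Finset

namespace TwoNCTAP

variable {V : Type*}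

/-- The graph `H` with the vertex `u` "deleted": all edges incident to `u` are removed,
so that `u` becomes an isolated vertex. -/
def delVert (H : SimpleGraph V) (u : V) : SimpleGraph V where
  Adj a b := H.Adj a b ∧ a ≠ u ∧ b ≠ u
  symm := ⟨by rintro a b ⟨h, ha, hb⟩; exact ⟨h.symm, hb, ha⟩⟩
  loopless := ⟨by rintro a ⟨h, -, -⟩; exact H.loopless.irrefl a h⟩

/-- The partition of `V ∖ {u}` into the vertex sets of the connected components of `H − u`. -/
def compPartition (H : SimpleGraph V) (u : V) : Set (Set V) :=
  {S | ∃ v, v ≠ u ∧ S = {w | (delVert H u).Reachable v w}}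

/-- `P` is a partition of the set `S`. -/
def IsPartitionOf (P : Set (Set V)) (S : Set V) : Prop :=
  (∀ B ∈ P, B.Nonempty) ∧ (∀ B ∈ P, B ⊆ S) ∧ ∀ v ∈ S, ∃! B : Set V, B ∈ P ∧ v ∈ B

/-- `P ∈ Ptn⊇(comps(T−u))`: `P` is a partition of `V ∖ {u}` each of whose blocks is a
union of vertex sets of connected components of `T − u`. -/
def PtnSup (T : SimpleGraph V) (u : V) (P : Set (Set V)) : Prop :=
  IsPartitionOf P {v | v ≠ u} ∧ ∀ B ∈ compPartition T u, ∃ C ∈ P, B ⊆ C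

/-- An edge `e` crosses the partition `P` if its two endpoints lie in different blocks of `P`. -/
def Crosses (P : Set (Set V)) (e : Sym2 V) : Prop :=
  ∃ v w, e = s(v, w) ∧ ∃ B ∈ P, ∃ C ∈ P, B ≠ C ∧ v ∈ B ∧ w ∈ C

/-- `u` is a non-leaf node of `T`. -/
def NonLeaf (T : SimpleGraph V) (u : V) : Prop := 1 < (T.neighborSet u).ncard

/-- The links of the instance: the edges of `G` that are not edges of the tree `T`. -/
def links (G T : SimpleGraph V) : Set (Sym2 V) := G.edgeSet \ T.edgeSet

variable [Fintype V]

/-- Feasibility for the partition LP (P) of the 2NC-TAP instance `(G, T, cost)`. -/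
def FeasibleP (G T : SimpleGraph V) (x : Sym2 V → ℝ) : Prop :=
  (∀ ℓ ∈ links G T, 0 ≤ x ℓ) ∧
  ∀ u : V, NonLeaf T u → ∀ P : Set (Set V), PtnSup T u P →
    (P.ncard : ℝ) - 1 ≤
      ∑ ℓ ∈ Finset.univ.filter (fun ℓ : Sym2 V => ℓ ∈ links G T ∧ Crosses P ℓ), x ℓ

end TwoNCTAP

/-!
If `x ℓ > 1` for a link `ℓ`, then lowering `x ℓ` to `1` keeps `x` feasible. Indeed, if `ℓ`
crosses the partition `P` of a constraint, merging the two blocks of `P` joined by `ℓ` gives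
the partition of another constraint of (P), with one block fewer and not crossed by `ℓ`; so
the links other than `ℓ` crossing `P` already carry `|P| - 2`. Raising `x ℓ` keeps feasibility
too, so `x` is the midpoint of two distinct feasible points.
-/

namespace TwoNCTAP

variable {V : Type*} {S : Set V} {P Q : Set (Set V)} {B C D : Set V}

def Refines (P Q : Set (Set V)) : Prop := ∀ B ∈ P, ∃ C ∈ Q, B ⊆ C

theorem Refines.trans {R : Set (Set V)} (hPQ : Refines P Q) (hQR : Refines Q R) :
    Refines P R := fun B hB ↦
  let ⟨C, hC, hBC⟩ := hPQ B hB
  let ⟨D, hD, hCD⟩ := hQR C hC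
  ⟨D, hD, hBC.trans hCD⟩

def mergeBlocks (P : Set (Set V)) (B C : Set V) : Set (Set V) := insert (B ∪ C) (P \ {B, C})

theorem refines_mergeBlocks : Refines P (mergeBlocks P B C) := by
  intro D hD
  by_cases hDBC : D = B ∨ D = C
  · refine ⟨B ∪ C, Set.mem_insert _ _, ?_⟩
    rcases hDBC with rfl | rfl
    exacts [Set.subset_union_left, Set.subset_union_right]
  · exact ⟨D, Set.mem_insert_of_mem _ ⟨hD, hDBC⟩, subset_rfl⟩

namespace IsPartitionOf

theorem eq_of_mem_of_mem (hP : IsPartitionOf P S) (hB : B ∈ P) (hC : C ∈ P) {v : V}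
    (hvB : v ∈ B) (hvC : v ∈ C) : B = C :=
  (hP.2.2 v (hP.2.1 B hB hvB)).unique ⟨hB, hvB⟩ ⟨hC, hvC⟩

theorem union_notMem (hP : IsPartitionOf P S) (hB : B ∈ P) (hC : C ∈ P) (hBC : B ≠ C) :
    B ∪ C ∉ P := by
  intro hBC'
  obtain ⟨v, hv⟩ := hP.1 B hB
  obtain ⟨w, hw⟩ := hP.1 C hC
  have hB' : B = B ∪ C := hP.eq_of_mem_of_mem hB hBC' hv (Or.inl hv)
  have hC' : C = B ∪ C := hP.eq_of_mem_of_mem hC hBC' hw (Or.inr hw)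
  exact hBC (hB'.trans hC'.symm)

theorem mergeBlocks (hP : IsPartitionOf P S) (hB : B ∈ P) (hC : C ∈ P) :
    IsPartitionOf (mergeBlocks P B C) S := by
  obtain ⟨hne, hsub, huniq⟩ := hP
  refine ⟨?_, ?_, fun v hv ↦ ?_⟩
  · rintro D (rfl | ⟨hD, -⟩)
    exacts [(hne B hB).mono Set.subset_union_left, hne D hD]
  · rintro D (rfl | ⟨hD, -⟩)
    exacts [Set.union_subset (hsub B hB) (hsub C hC), hsub D hD]
  obtain ⟨D, ⟨hD, hvD⟩, hDuniq⟩ := huniq v hv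
  have hBD (hvB : v ∈ B) : B = D := hDuniq B ⟨hB, hvB⟩
  have hCD (hvC : v ∈ C) : C = D := hDuniq C ⟨hC, hvC⟩
  by_cases hvBC : v ∈ B ∪ C
  · refine ⟨B ∪ C, ⟨Set.mem_insert _ _, hvBC⟩, ?_⟩
    rintro D' ⟨rfl | ⟨hD', hD'BC⟩, hvD'⟩
    · rfl
    · have hD'D : D' = D := hDuniq D' ⟨hD', hvD'⟩
      rcases hvBC with hvB | hvC
      exacts [absurd (Or.inl (hD'D.trans (hBD hvB).symm)) hD'BC,
        absurd (Or.inr (hD'D.trans (hCD hvC).symm)) hD'BC]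
  · have hDBC : ¬(D = B ∨ D = C) := by
      rintro (rfl | rfl)
      exacts [hvBC (Or.inl hvD), hvBC (Or.inr hvD)]
    refine ⟨D, ⟨Set.mem_insert_of_mem _ ⟨hD, hDBC⟩, hvD⟩, ?_⟩
    rintro D' ⟨rfl | ⟨hD', -⟩, hvD'⟩
    exacts [absurd hvD' hvBC, hDuniq D' ⟨hD', hvD'⟩]

theorem ncard_mergeBlocks (hP : IsPartitionOf P S) (hfin : P.Finite) (hB : B ∈ P) (hC : C ∈ P)
    (hBC : B ≠ C) : (TwoNCTAP.mergeBlocks P B C).ncard + 1 = P.ncard := by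
  have hpair : {B, C} ⊆ P := Set.insert_subset hB (Set.singleton_subset_iff.2 hC)
  have htwo : 2 ≤ P.ncard := Set.ncard_pair hBC ▸ Set.ncard_le_ncard hpair hfin
  rw [TwoNCTAP.mergeBlocks,
    Set.ncard_insert_of_notMem (fun h ↦ hP.union_notMem hB hC hBC h.1) hfin.sdiff,
    Set.ncard_sdiff hpair, Set.ncard_pair hBC]
  omega

theorem not_crosses (hP : IsPartitionOf P S) (hD : D ∈ P) {v w : V} (hv : v ∈ D)
    (hw : w ∈ D) : ¬Crosses P s(v, w) := by
  rintro ⟨a, b, hab, B, hB, C, hC, hBC, haB, hbC⟩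
  have hsame {x y : V} (hx : x ∈ D) (hy : y ∈ D) (hxB : x ∈ B) (hyC : y ∈ C) : False :=
    hBC ((hP.eq_of_mem_of_mem hB hD hxB hx).trans (hP.eq_of_mem_of_mem hD hC hy hyC))
  rcases Sym2.eq_iff.1 hab with ⟨rfl, rfl⟩ | ⟨rfl, rfl⟩
  exacts [hsame hv hw haB hbC, hsame hw hv haB hbC]

theorem crosses_of_refines (hP : IsPartitionOf P S) (hQ : IsPartitionOf Q S)
    (hPQ : Refines P Q) {e : Sym2 V} (he : Crosses Q e) : Crosses P e := by
  obtain ⟨a, b, rfl, B, hB, C, hC, hBC, haB, hbC⟩ := he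
  obtain ⟨A', ⟨hA', haA'⟩, -⟩ := hP.2.2 a (hQ.2.1 B hB haB)
  obtain ⟨B', ⟨hB', hbB'⟩, -⟩ := hP.2.2 b (hQ.2.1 C hC hbC)
  refine ⟨a, b, rfl, A', hA', B', hB', ?_, haA', hbB'⟩
  rintro rfl
  obtain ⟨D, hD, hA'D⟩ := hPQ A' hA'
  exact hBC ((hQ.eq_of_mem_of_mem hB hD haB (hA'D haA')).trans
    (hQ.eq_of_mem_of_mem hD hC (hA'D hbB') hbC))

end IsPartitionOf

theorem PtnSup.mergeBlocks {T : SimpleGraph V} {u : V} (hP : PtnSup T u P) (hB : B ∈ P)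
    (hC : C ∈ P) : PtnSup T u (mergeBlocks P B C) :=
  ⟨hP.1.mergeBlocks hB hC, Refines.trans hP.2 refines_mergeBlocks⟩

variable [Fintype V] {G T : SimpleGraph V} {x : Sym2 V → ℝ}

noncomputable def crossingLinks (G T : SimpleGraph V) (P : Set (Set V)) : Finset (Sym2 V) :=
  Finset.univ.filter fun ℓ ↦ ℓ ∈ links G T ∧ Crosses P ℓ

def partitionLPRegion (G T : SimpleGraph V) : Set (Sym2 V → ℝ) :=
  {z | (∀ ℓ, ℓ ∉ links G T → z ℓ = 0) ∧ FeasibleP G T z}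

theorem FeasibleP.ncard_sub_two_le_sum_erase (hx : FeasibleP G T x) {u : V} (hu : NonLeaf T u)
    (hP : PtnSup T u P) {ℓ : Sym2 V} (hℓ : ℓ ∈ crossingLinks G T P) :
    (P.ncard : ℝ) - 2 ≤ ∑ e ∈ (crossingLinks G T P).erase ℓ, x e := by
  obtain ⟨-, -, v, w, rfl, B, hB, C, hC, hBC, hvB, hwC⟩ := Finset.mem_filter.1 hℓ
  have hmerge : PtnSup T u (mergeBlocks P B C) := hP.mergeBlocks hB hC
  have hcard := hP.1.ncard_mergeBlocks (Set.toFinite P) hB hC hBC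
  have hsub : crossingLinks G T (mergeBlocks P B C) ⊆ (crossingLinks G T P).erase s(v, w) := by
    intro e he
    simp only [crossingLinks, Finset.mem_erase, Finset.mem_filter, Finset.mem_univ,
      true_and] at he ⊢
    refine ⟨?_, he.1, hP.1.crosses_of_refines hmerge.1 refines_mergeBlocks he.2⟩
    rintro rfl
    exact hmerge.1.not_crosses (Set.mem_insert _ _) (Or.inl hvB) (Or.inr hwC) he.2
  calc (P.ncard : ℝ) - 2 = ((mergeBlocks P B C).ncard : ℝ) - 1 := by
        rw [← hcard]; push_cast; ring
    _ ≤ ∑ e ∈ crossingLinks G T (mergeBlocks P B C), x e := hx.2 u hu _ hmerge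
    _ ≤ ∑ e ∈ (crossingLinks G T P).erase s(v, w), x e :=
      Finset.sum_le_sum_of_subset_of_nonneg hsub fun e he _ ↦
        hx.1 e (Finset.mem_filter.1 (Finset.mem_of_mem_erase he)).2.1

theorem FeasibleP.add_single (hx : FeasibleP G T x) {ℓ : Sym2 V} {t : ℝ} (ht : 1 ≤ x ℓ + t) :
    FeasibleP G T (x + Pi.single ℓ t) := by
  refine ⟨fun e he ↦ ?_, fun u hu P hP ↦ ?_⟩
  · rcases eq_or_ne e ℓ with rfl | hne
    · rw [Pi.add_apply, Pi.single_eq_same]; linarith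
    · rw [Pi.add_apply, Pi.single_eq_of_ne hne, add_zero]; exact hx.1 e he
  · change _ ≤ ∑ e ∈ crossingLinks G T P, (x + Pi.single ℓ t : Sym2 V → ℝ) e
    simp only [Pi.add_apply]
    rw [Finset.sum_add_distrib, Finset.sum_pi_single']
    split_ifs with hℓ
    · rw [← Finset.add_sum_erase _ _ hℓ]
      linarith [hx.ncard_sub_two_le_sum_erase hu hP hℓ]
    · rw [add_zero]; exact hx.2 u hu P hP

theorem add_single_mem_partitionLPRegion (hx : x ∈ partitionLPRegion G T) {ℓ : Sym2 V}
    (hℓ : ℓ ∈ links G T) {t : ℝ} (ht : 1 ≤ x ℓ + t) :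
    x + Pi.single ℓ t ∈ partitionLPRegion G T := by
  refine ⟨fun e he ↦ ?_, hx.2.add_single ht⟩
  rw [Pi.add_apply, Pi.single_eq_of_ne (by rintro rfl; exact he hℓ), add_zero]
  exact hx.1 e he

theorem extreme_points_of_partitionLP_in_unit_cube_general
    (G T : SimpleGraph V)
    (x : Sym2 V → ℝ)
    (hx : x ∈ Set.extremePoints ℝ
      {z : Sym2 V → ℝ | (∀ ℓ, ℓ ∉ links G T → z ℓ = 0) ∧ FeasibleP G T z}) :
    ∀ ℓ ∈ links G T, 0 ≤ x ℓ ∧ x ℓ ≤ 1 := by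
  change x ∈ (partitionLPRegion G T).extremePoints ℝ at hx
  intro ℓ hℓ
  refine ⟨hx.1.2.1 ℓ hℓ, not_lt.1 fun hgt ↦ ?_⟩
  have hlow : x - Pi.single ℓ (x ℓ - 1) ∈ partitionLPRegion G T := by
    rw [sub_eq_add_neg, ← Pi.single_neg]
    exact add_single_mem_partitionLPRegion hx.1 hℓ (by linarith)
  have hhigh : x + Pi.single ℓ (x ℓ - 1) ∈ partitionLPRegion G T :=
    add_single_mem_partitionLPRegion hx.1 hℓ (by linarith)
  have hzero : Pi.single ℓ (x ℓ - 1) = 0 :=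
    sub_eq_self.1 (hx.2 hlow hhigh (mem_openSegment_sub_add x _))
  linarith [Pi.single_eq_zero_iff.1 hzero]

/-- Every extreme point of the feasible region of the partition LP (P)
of a 2NC-TAP instance lies in the unit cube. The feasible region is viewed inside
`ℝ^(Sym2 V)`, with coordinates supported on the set of links. -/
theorem extreme_points_of_partitionLP_in_unit_cube
    (G T : SimpleGraph V) (hV : 3 ≤ Fintype.card V)
    (hTG : T ≤ G) (hT : T.IsTree)
    (cost : Sym2 V → ℝ) (hcost : ∀ ℓ ∈ links G T, 0 ≤ cost ℓ)
    (x : Sym2 V → ℝ)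
    (hx : x ∈ Set.extremePoints ℝ
      {z : Sym2 V → ℝ | (∀ ℓ, ℓ ∉ links G T → z ℓ = 0) ∧ FeasibleP G T z}) :
    ∀ ℓ ∈ links G T, 0 ≤ x ℓ ∧ x ℓ ≤ 1 :=
  extreme_points_of_partitionLP_in_unit_cube_general G T x hx

end TwoNCTAP
end

section
/- Let n ≥ 4 and let G be the graph on nodes {r, u_1, …, u_{n−1}} consisting of the spanning star T = K_{1,n−1} with center r and leaves u_1, …, u_{n−1} (tree edges of cost 0), together with the n−1 unit-cost links u_i u_{i+1} for i ∈ [n−2] and u_{n−1} u_1. Then the vector x̂ ∈ ℝ^{E(G)} with x̂_e = 1 for every tree edge e and x̂_ℓ = 1/2 for every link ℓ is a feasible solution of the set-pairs LP for (G, cost), of total cost (n−1)/2. Combined with the fact that every integral feasible solution has cost at least n−2, the integrality ratio of the set-pairs LP on this family of instances is at least 2(n−2)/(n−1), which tends to 2 as n → ∞. -/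
/-!
The vector puts weight 1 on each spoke `0 v` of the star and 1/2 on each link. A cut `δ(S)` may be
taken with the centre `0 ∉ S` (otherwise pass to the complement), so it contains the spoke of
every leaf of `S`. If `S` contains every leaf, two spokes already give 2; otherwise the leaves in
`S` form a proper nonempty part of the leaf cycle, which is left by at least two links, and these
add 1 to a spoke. The same two links settle the set-pair constraint for `w = 0`; for `w ≠ 0` one
spoke joins `S` to `V ∖ (S ∪ {w})`. Only the `n - 1` links cost anything.
-/

open scoped Classical
open Finset

namespace TwoNCTAP

variable {V : Type*}

def withLinks (T : SimpleGraph V) (F : Set (Sym2 V)) : SimpleGraph V :=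
  T ⊔ SimpleGraph.fromEdgeSet F

def inCut (S : Set V) (e : Sym2 V) : Prop :=
  ∃ a b, e = s(a, b) ∧ a ∈ S ∧ b ∉ S

/-- The edge `e = ab` has `a ∈ S` and `b ∈ (V ∖ {w}) ∖ S` (a set-pair constraint edge). -/
def inCutAvoiding (w : V) (S : Set V) (e : Sym2 V) : Prop :=
  ∃ a b, e = s(a, b) ∧ a ∈ S ∧ b ∉ S ∧ b ≠ w

theorem inCut_compl {S : Set V} {e : Sym2 V} : inCut Sᶜ e ↔ inCut S e := by
  constructor <;> rintro ⟨a, b, rfl, ha, hb⟩ <;>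
    exact ⟨b, a, Sym2.eq_swap, by simpa using hb, by simpa using ha⟩

theorem inCutAvoiding.inCut {w : V} {S : Set V} {e : Sym2 V} (h : inCutAvoiding w S e) :
    inCut S e :=
  let ⟨a, b, he, ha, hb, _⟩ := h
  ⟨a, b, he, ha, hb⟩

theorem edgeSet_withLinks {T : SimpleGraph V} {F : Set (Sym2 V)} (hF : ∀ e ∈ F, ¬ e.IsDiag) :
    (withLinks T F).edgeSet = T.edgeSet ∪ F := by
  rw [withLinks, SimpleGraph.edgeSet_sup, SimpleGraph.edgeSet_fromEdgeSet]
  congr 1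
  exact sdiff_eq_left.mpr (Set.disjoint_left.mpr hF)

section Sums

variable {α : Type*} [Fintype α] {x : α → ℝ}

theorem sum_le_sum_filter (hx : ∀ a, 0 ≤ x a) {P : α → Prop} [DecidablePred P] {s : Finset α}
    (hs : ∀ a ∈ s, P a) : ∑ a ∈ s, x a ≤ ∑ a ∈ univ.filter P, x a :=
  sum_le_sum_of_subset_of_nonneg (fun a ha => mem_filter.mpr ⟨mem_univ a, hs a ha⟩)
    fun a _ _ => hx a

theorem add_sum_filter_le_sum_filter (hx : ∀ a, 0 ≤ x a) {P Q : α → Prop} [DecidablePred P]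
    [DecidablePred Q] (hQP : ∀ a, Q a → P a) {a₀ : α} (hP : P a₀) (hQ : ¬ Q a₀) :
    x a₀ + ∑ a ∈ univ.filter Q, x a ≤ ∑ a ∈ univ.filter P, x a := by
  rw [← sum_insert (by simpa using hQ)]
  refine sum_le_sum_filter hx fun a ha => ?_
  rcases mem_insert.mp ha with rfl | ha
  exacts [hP, hQP a (mem_filter.mp ha).2]

end Sums

theorem Fin.exists_and_not_add_one {p : ℕ} {P : Fin (p + 1) → Prop} {i j : Fin (p + 1)}
    (hi : P i) (hj : ¬ P j) : ∃ a, P a ∧ ¬ P (a + 1) := by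
  by_contra! h
  have hall : ∀ k, P (i + k) := by
    intro k
    induction k using Fin.induction with
    | zero => simpa using hi
    | succ k ih => rw [← Fin.coeSucc_eq_succ, ← add_assoc]; exact h _ ih
  exact hj (by simpa using hall (j - i))

theorem Fin.ne_add_one {p : ℕ} (hp : 1 ≤ p) (k : Fin (p + 1)) : k ≠ k + 1 := by
  rw [Ne, Fin.ext_iff, Fin.val_add_one]
  split_ifs with hk
  · rw [hk, Fin.val_last]; omega
  · omega

theorem not_inCutAvoiding_of_mem {w : V} {S : Set V} {e : Sym2 V} (hwe : w ∈ e) (hwS : w ∉ S) :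
    ¬ inCutAvoiding w S e := by
  rintro ⟨a, b, rfl, ha, -, hbw⟩
  rcases Sym2.mem_iff.mp hwe with rfl | rfl
  exacts [hwS ha, hbw rfl]

def starTree (n : ℕ) : SimpleGraph (Fin n) :=
  SimpleGraph.fromEdgeSet {e | ∃ r i : Fin n, (r : ℕ) = 0 ∧ 1 ≤ (i : ℕ) ∧ e = s(r, i)}

def leafCycle (n : ℕ) : Set (Sym2 (Fin n)) :=
  {e | (∃ i j : Fin n, 1 ≤ (i : ℕ) ∧ (i : ℕ) ≤ n - 2 ∧ (j : ℕ) = (i : ℕ) + 1 ∧ e = s(i, j)) ∨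
    (∃ a b : Fin n, (a : ℕ) = n - 1 ∧ (b : ℕ) = 1 ∧ e = s(a, b))}

def starInstance (p : ℕ) : SimpleGraph (Fin (p + 2)) :=
  withLinks (starTree (p + 2)) (leafCycle (p + 2))

noncomputable def xHat (n : ℕ) (e : Sym2 (Fin n)) : ℝ :=
  if e ∈ (starTree n).edgeSet then 1 else 1 / 2

/-- With `n = p + 2` nodes, the leaves are `k.succ` for `k : Fin (p + 1)`, and the links join
`k.succ` to `(k + 1).succ`, addition in `Fin (p + 1)` being cyclic. -/
def leafLink (p : ℕ) (k : Fin (p + 1)) : Sym2 (Fin (p + 2)) :=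
  s(k.succ, (k + 1).succ)

theorem mem_starTree_edgeSet {m : ℕ} {e : Sym2 (Fin (m + 1))} :
    e ∈ (starTree (m + 1)).edgeSet ↔ ∃ k : Fin m, e = s(0, k.succ) := by
  simp only [starTree, SimpleGraph.edgeSet_fromEdgeSet, Set.mem_sdiff, Set.mem_ofPred_eq]
  constructor
  · rintro ⟨⟨r, i, hr, hi, rfl⟩, -⟩
    obtain ⟨k, rfl⟩ := Fin.exists_succ_eq.mpr (Fin.pos_iff_ne_zero.mp hi)
    obtain rfl : r = 0 := Fin.ext hr
    exact ⟨k, rfl⟩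
  · rintro ⟨k, rfl⟩
    exact ⟨⟨0, k.succ, rfl, by simp, rfl⟩, fun h => k.succ_ne_zero (Sym2.mk_isDiag_iff.mp h).symm⟩

theorem leafCycle_eq_range (p : ℕ) : leafCycle (p + 2) = Set.range (leafLink p) := by
  ext e
  simp only [leafCycle, leafLink, Set.mem_ofPred_eq, Set.mem_range]
  constructor
  · rintro (⟨i, j, hi, hip, hj, rfl⟩ | ⟨a, b, ha, hb, rfl⟩)
    · refine ⟨⟨i - 1, by omega⟩, ?_⟩
      have hk : (⟨i - 1, by omega⟩ : Fin (p + 1)) ≠ Fin.last p := by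
        simp only [ne_eq, Fin.ext_iff, Fin.val_last]; omega
      congr 1 <;> ext <;>
        simp only [Fin.succ_mk, Fin.val_succ, Fin.val_add_one, hk, ↓reduceIte] <;> omega
    · refine ⟨Fin.last p, ?_⟩
      congr 1 <;> ext <;>
        simp only [Fin.succ_last, Fin.val_last, Fin.last_add_one, Fin.succ_zero_eq_one,
          Fin.coe_ofNat_eq_mod, Nat.one_mod] <;> omega
  · rintro ⟨k, rfl⟩
    by_cases hk : k = Fin.last p
    · subst hk
      exact Or.inr ⟨_, _, by simp, by simp, rfl⟩
    · have hkp : (k : ℕ) < p := Fin.val_lt_last hk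
      exact Or.inl ⟨_, _, by simp, by simp only [Fin.val_succ]; omega,
        by simp [Fin.val_add_one, hk], rfl⟩

theorem zero_notMem_leafLink {p : ℕ} (k : Fin (p + 1)) : (0 : Fin (p + 2)) ∉ leafLink p k := by
  simp [leafLink, Sym2.mem_iff, eq_comm, Fin.succ_ne_zero]

theorem leafLink_notMem_starTree {p : ℕ} (k : Fin (p + 1)) :
    leafLink p k ∉ (starTree (p + 2)).edgeSet := by
  rw [mem_starTree_edgeSet]
  rintro ⟨j, hj⟩
  exact zero_notMem_leafLink k (hj ▸ Sym2.mem_mk_left _ _)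

theorem leafLink_not_isDiag {p : ℕ} (hp : 1 ≤ p) (k : Fin (p + 1)) : ¬ (leafLink p k).IsDiag := by
  rw [leafLink, Sym2.mk_isDiag_iff, Fin.succ_inj]
  exact Fin.ne_add_one hp k

theorem leafLink_injective {p : ℕ} (hp : 2 ≤ p) : Function.Injective (leafLink p) := by
  intro a b h
  rcases Sym2.eq_iff.mp h with ⟨h1, -⟩ | ⟨h1, h2⟩
  · exact Fin.succ_injective _ h1
  · have h1 := Fin.succ_injective _ h1
    have h2 := Fin.succ_injective _ h2
    rw [Fin.ext_iff, Fin.val_add_one] at h1 h2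
    have := a.isLt
    have := b.isLt
    split_ifs at h1 h2 with ha hb <;> simp_all <;> omega

theorem spoke_mem_starTree {m : ℕ} {v : Fin (m + 1)} (hv : v ≠ 0) :
    s(0, v) ∈ (starTree (m + 1)).edgeSet := by
  obtain ⟨k, rfl⟩ := Fin.exists_succ_eq.mpr hv
  exact mem_starTree_edgeSet.mpr ⟨k, rfl⟩

theorem edgeSet_starTree_subset (p : ℕ) :
    (starTree (p + 2)).edgeSet ⊆ (starInstance p).edgeSet :=
  SimpleGraph.edgeSet_mono le_sup_left

theorem edgeSet_starInstance {p : ℕ} (hp : 1 ≤ p) :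
    (starInstance p).edgeSet = (starTree (p + 2)).edgeSet ∪ Set.range (leafLink p) := by
  rw [starInstance, leafCycle_eq_range, edgeSet_withLinks]
  rintro _ ⟨k, rfl⟩
  exact leafLink_not_isDiag hp k

theorem leafLink_mem_starInstance {p : ℕ} (hp : 1 ≤ p) (k : Fin (p + 1)) :
    leafLink p k ∈ (starInstance p).edgeSet := by
  rw [edgeSet_starInstance hp]
  exact Or.inr ⟨k, rfl⟩

theorem xHat_of_mem {n : ℕ} {e : Sym2 (Fin n)} (he : e ∈ (starTree n).edgeSet) : xHat n e = 1 :=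
  if_pos he

theorem xHat_leafLink {p : ℕ} (k : Fin (p + 1)) : xHat (p + 2) (leafLink p k) = 1 / 2 :=
  if_neg (leafLink_notMem_starTree k)

theorem xHat_nonneg {n : ℕ} (e : Sym2 (Fin n)) : 0 ≤ xHat n e := by
  unfold xHat; split_ifs <;> norm_num

theorem xHat_le_one {n : ℕ} (e : Sym2 (Fin n)) : xHat n e ≤ 1 := by
  unfold xHat; split_ifs <;> norm_num

theorem one_le_sum_leafLinks_crossing {p : ℕ} (hp : 2 ≤ p) {S : Set (Fin (p + 2))}
    {i j : Fin (p + 1)} (hi : i.succ ∈ S) (hj : j.succ ∉ S) :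
    1 ≤ ∑ e ∈ univ.filter (fun e => e ∈ (starInstance p).edgeSet ∧ inCutAvoiding 0 S e),
      xHat (p + 2) e := by
  obtain ⟨a, haS, ha⟩ := Fin.exists_and_not_add_one (P := fun k => k.succ ∈ S) hi hj
  obtain ⟨b, hbS, hb⟩ := Fin.exists_and_not_add_one (P := fun k => k.succ ∉ S) hj (not_not.mpr hi)
  have hab : leafLink p a ≠ leafLink p b := (leafLink_injective hp).ne fun h => hbS (h ▸ haS)
  calc (1 : ℝ) = ∑ e ∈ {leafLink p a, leafLink p b}, xHat (p + 2) e := by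
        rw [sum_pair hab, xHat_leafLink, xHat_leafLink]; norm_num
    _ ≤ _ := by
      refine sum_le_sum_filter xHat_nonneg ?_
      simp only [mem_insert, mem_singleton, forall_eq_or_imp, forall_eq]
      exact ⟨⟨leafLink_mem_starInstance (by omega) a, _, _, rfl, haS, ha, Fin.succ_ne_zero _⟩,
        ⟨leafLink_mem_starInstance (by omega) b, _, _, Sym2.eq_swap, not_not.mp hb, hbS,
          Fin.succ_ne_zero _⟩⟩

theorem two_le_sum_cut_of_zero_notMem {p : ℕ} (hp : 2 ≤ p) {S : Set (Fin (p + 2))}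
    (hS : S.Nonempty) (h0 : 0 ∉ S) :
    2 ≤ ∑ e ∈ univ.filter (fun e => e ∈ (starInstance p).edgeSet ∧ inCut S e), xHat (p + 2) e := by
  obtain ⟨v, hv⟩ := hS
  obtain ⟨i, rfl⟩ := Fin.exists_succ_eq.mpr (ne_of_mem_of_not_mem hv h0)
  by_cases hleaves : ∀ j : Fin (p + 1), j.succ ∈ S
  · have hne : s(0, i.succ) ≠ s(0, (i + 1).succ) := by
      rw [Ne, Sym2.congr_right, Fin.succ_inj]
      exact Fin.ne_add_one (by omega) i
    calc (2 : ℝ) = ∑ e ∈ {s(0, i.succ), s(0, (i + 1).succ)}, xHat (p + 2) e := by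
          rw [sum_pair hne, xHat_of_mem (spoke_mem_starTree i.succ_ne_zero),
            xHat_of_mem (spoke_mem_starTree (i + 1).succ_ne_zero)]
          norm_num
      _ ≤ _ := by
        refine sum_le_sum_filter xHat_nonneg ?_
        simp only [mem_insert, mem_singleton, forall_eq_or_imp, forall_eq]
        exact ⟨⟨edgeSet_starTree_subset p (spoke_mem_starTree i.succ_ne_zero), _, _,
            Sym2.eq_swap, hv, h0⟩,
          ⟨edgeSet_starTree_subset p (spoke_mem_starTree (i + 1).succ_ne_zero), _, _,
            Sym2.eq_swap, hleaves _, h0⟩⟩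
  · push Not at hleaves
    obtain ⟨j, hj⟩ := hleaves
    have hspoke := edgeSet_starTree_subset p (spoke_mem_starTree i.succ_ne_zero)
    calc (2 : ℝ) = xHat (p + 2) s(0, i.succ) + 1 := by
          rw [xHat_of_mem (spoke_mem_starTree i.succ_ne_zero)]; norm_num
      _ ≤ xHat (p + 2) s(0, i.succ) + ∑ e ∈ univ.filter
            (fun e => e ∈ (starInstance p).edgeSet ∧ inCutAvoiding 0 S e), xHat (p + 2) e :=
          add_le_add_right (one_le_sum_leafLinks_crossing hp hv hj) _
      _ ≤ _ := add_sum_filter_le_sum_filter xHat_nonneg (fun e h => ⟨h.1, h.2.inCut⟩)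
          ⟨hspoke, _, _, Sym2.eq_swap, hv, h0⟩
          fun h => not_inCutAvoiding_of_mem (Sym2.mem_mk_left _ _) h0 h.2

theorem two_le_sum_cut {p : ℕ} (hp : 2 ≤ p) (S : Set (Fin (p + 2))) (hS : S.Nonempty)
    (hSu : S ≠ Set.univ) :
    2 ≤ ∑ e ∈ univ.filter (fun e => e ∈ (starInstance p).edgeSet ∧ inCut S e), xHat (p + 2) e := by
  by_cases h0 : (0 : Fin (p + 2)) ∈ S
  · simpa only [inCut_compl] using
      two_le_sum_cut_of_zero_notMem hp (Set.nonempty_compl.mpr hSu) (by simpa using h0)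
  · exact two_le_sum_cut_of_zero_notMem hp hS h0

theorem one_le_sum_setPair {p : ℕ} (hp : 2 ≤ p) (w : Fin (p + 2)) (S : Set (Fin (p + 2)))
    (hS : S.Nonempty) (hsub : S ⊆ {v | v ≠ w}) (hne : S ≠ {v | v ≠ w}) :
    1 ≤ ∑ e ∈ univ.filter (fun e => e ∈ (starInstance p).edgeSet ∧ inCutAvoiding w S e),
      xHat (p + 2) e := by
  obtain ⟨b, hbw, hbS⟩ := Set.exists_of_ssubset (hsub.ssubset_of_ne hne)
  obtain ⟨a, haS⟩ := hS
  by_cases hw : w = 0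
  · subst hw
    obtain ⟨i, rfl⟩ := Fin.exists_succ_eq.mpr (hsub haS)
    obtain ⟨j, rfl⟩ := Fin.exists_succ_eq.mpr hbw
    exact one_le_sum_leafLinks_crossing hp haS hbS
  obtain ⟨u, v, huS, hvS, hvw, huv⟩ : ∃ u v, u ∈ S ∧ v ∉ S ∧ v ≠ w ∧
      s(u, v) ∈ (starTree (p + 2)).edgeSet := by
    by_cases h0 : (0 : Fin (p + 2)) ∈ S
    · exact ⟨0, b, h0, hbS, hbw, spoke_mem_starTree (ne_of_mem_of_not_mem h0 hbS).symm⟩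
    · exact ⟨a, 0, haS, h0, Ne.symm hw,
        Sym2.eq_swap ▸ spoke_mem_starTree (ne_of_mem_of_not_mem haS h0)⟩
  calc (1 : ℝ) = ∑ e ∈ {s(u, v)}, xHat (p + 2) e := by rw [sum_singleton, xHat_of_mem huv]
    _ ≤ _ := sum_le_sum_filter xHat_nonneg fun e he => by
        rw [mem_singleton.mp he]
        exact ⟨edgeSet_starTree_subset p huv, u, v, rfl, huS, hvS, hvw⟩

theorem sum_cost_mul_xHat {p : ℕ} (hp : 2 ≤ p) {cost : Sym2 (Fin (p + 2)) → ℝ}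
    (hcT : ∀ e ∈ (starTree (p + 2)).edgeSet, cost e = 0)
    (hcL : ∀ e ∈ leafCycle (p + 2), cost e = 1) :
    ∑ e ∈ univ.filter (· ∈ (starInstance p).edgeSet), cost e * xHat (p + 2) e = (p + 1) / 2 := by
  have hsplit : univ.filter (· ∈ (starInstance p).edgeSet) =
      univ.filter (· ∈ (starTree (p + 2)).edgeSet) ∪ univ.image (leafLink p) := by
    ext e
    simp [edgeSet_starInstance (by omega : 1 ≤ p)]
  have hdisj :
      Disjoint (univ.filter (· ∈ (starTree (p + 2)).edgeSet)) (univ.image (leafLink p)) := by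
    simp only [disjoint_left, mem_filter, mem_image]
    rintro _ ⟨-, he⟩ ⟨k, -, rfl⟩
    exact leafLink_notMem_starTree k he
  rw [hsplit, sum_union hdisj,
    sum_eq_zero fun e he => by rw [hcT e (mem_filter.mp he).2, zero_mul],
    sum_image (leafLink_injective hp).injOn]
  simp only [leafCycle_eq_range, Set.mem_range, exists_apply_eq_apply, hcL, xHat_leafLink,
    one_mul, sum_const, card_univ, Fintype.card_fin, nsmul_eq_mul]
  push_cast
  ring

/-- For the star instance (`T = K_{1,n−1}` with tree edges of cost 0,
plus the `n−1` unit-cost links forming a cycle on the leaves), the vector `x̂` equal to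
`1` on tree edges and `1/2` on links is feasible for the set-pairs LP, of total cost
`(n−1)/2`. -/
theorem star_instance_set_pairs_feasible
    (n : ℕ) (hn : 4 ≤ n)
    (T : SimpleGraph (Fin n))
    (hT : T = SimpleGraph.fromEdgeSet
      {e | ∃ r i : Fin n, (r : ℕ) = 0 ∧ 1 ≤ (i : ℕ) ∧ e = s(r, i)})
    (Lk : Set (Sym2 (Fin n)))
    (hLk : Lk = {e | (∃ i j : Fin n, 1 ≤ (i : ℕ) ∧ (i : ℕ) ≤ n - 2 ∧
          (j : ℕ) = (i : ℕ) + 1 ∧ e = s(i, j)) ∨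
        (∃ a b : Fin n, (a : ℕ) = n - 1 ∧ (b : ℕ) = 1 ∧ e = s(a, b))})
    (G : SimpleGraph (Fin n)) (hG : G = withLinks T Lk)
    (cost : Sym2 (Fin n) → ℝ)
    (hcT : ∀ e ∈ T.edgeSet, cost e = 0) (hcL : ∀ e ∈ Lk, cost e = 1)
    (x : Sym2 (Fin n) → ℝ)
    (hx : x = fun e => if e ∈ T.edgeSet then 1 else 1 / 2) :
    (∀ e ∈ G.edgeSet, 0 ≤ x e ∧ x e ≤ 1) ∧
    (∀ S : Set (Fin n), S.Nonempty → S ≠ Set.univ →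
      (2 : ℝ) ≤ ∑ e ∈ Finset.univ.filter
          (fun e : Sym2 (Fin n) => e ∈ G.edgeSet ∧ inCut S e), x e) ∧
    (∀ (w : Fin n) (S : Set (Fin n)), S.Nonempty → S ⊆ {v | v ≠ w} → S ≠ {v | v ≠ w} →
      (1 : ℝ) ≤ ∑ e ∈ Finset.univ.filter
          (fun e : Sym2 (Fin n) => e ∈ G.edgeSet ∧ inCutAvoiding w S e), x e) ∧
    ∑ e ∈ Finset.univ.filter (fun e : Sym2 (Fin n) => e ∈ G.edgeSet), cost e * x e
      = ((n : ℝ) - 1) / 2 := by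
  obtain ⟨p, rfl⟩ : ∃ p, n = p + 2 := ⟨n - 2, by omega⟩
  have hp : 2 ≤ p := by omega
  subst hT hLk hG hx
  refine ⟨fun e _ => ⟨xHat_nonneg e, xHat_le_one e⟩, two_le_sum_cut hp, one_le_sum_setPair hp, ?_⟩
  refine (sum_cost_mul_xHat hp hcT hcL).trans ?_
  push_cast
  ring

end TwoNCTAP
end
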